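/- arXiv:0805.4431 — 6 statements merged into one kernel-verified Lean document; each statement's English description precedes it below -/
import Mathlib

section
/- Let D be a monoidal category, M an object of D, and suppose the morphism φ : M ⊗ A → M (induced by a morphism A → 1 and the right unitor) is an isomorphism. Then for any object N and any morphism π : N ⊗ A → N of the same type, the map Hom(M, N ⊗ A) → Hom(M, N) given by postcomposition with π admits a two-sided inverse given by f ↦ (f ⊗ id_A) ∘ φ⁻¹ whenever π ∘ (f ⊗ id_A) ∘ φ⁻¹ recovers f for all f : M → N; in particular if N ⊗ A → N is split by the relevant structure maps, postcomposition Hom(M, N ⊗ A) → Hom(M, N) is a bijection. -/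
open CategoryTheory CategoryTheory.MonoidalCategory

/-!
Write `φ_X = X ◁ v ≫ ρ_X : X ⊗ A ⟶ X`; it is natural in `X`. Surjectivity only needs `φ_M`
invertible: `g : M ⟶ N` lifts to `φ_M⁻¹ ≫ g ▷ A`. For injectivity, `(f ≫ φ_N) ▷ A` equals
`f ▷ A` followed by an isomorphism built from `v ▷ A ≫ λ_A`, so `f ≫ φ_N` determines `f ▷ A`;
and `f ▷ A` determines `f`, since `φ_M ≫ f = f ▷ A ≫ φ_{N ⊗ A}` with `φ_M` epi.
-/

namespace CategoryTheory.MonoidalCategory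

variable {C : Type*} [Category C] [MonoidalCategory C] {A : C} (v : A ⟶ 𝟙_ C)

def tensorProj (X : C) : X ⊗ A ⟶ X := X ◁ v ≫ (ρ_ X).hom

lemma tensorProj_naturality {X Y : C} (f : X ⟶ Y) :
    f ▷ A ≫ tensorProj v Y = tensorProj v X ≫ f := by
  simp [tensorProj, ← whisker_exchange_assoc]

lemma whiskerRight_comp_tensorProj {M N : C} (f : M ⟶ N ⊗ A) :
    (f ≫ tensorProj v N) ▷ A = f ▷ A ≫ (α_ N A A).hom ≫ N ◁ (v ▷ A ≫ (λ_ A).hom) := by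
  simp only [tensorProj, comp_whiskerRight, whiskerLeft_comp,
    ← associator_naturality_middle_assoc, triangle]

variable {v}

lemma whiskerRight_injective_of_isIso_tensorProj {M Y : C} [IsIso (tensorProj v M)]
    {f g : M ⟶ Y} (h : f ▷ A = g ▷ A) : f = g := by
  rw [← cancel_epi (tensorProj v M), ← tensorProj_naturality, ← tensorProj_naturality, h]

lemma comp_tensorProj_injective {M N : C} [IsIso (v ▷ A ≫ (λ_ A).hom)]
    [IsIso (tensorProj v M)] :
    Function.Injective (fun f : M ⟶ N ⊗ A => f ≫ tensorProj v N) := by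
  intro f g h
  apply whiskerRight_injective_of_isIso_tensorProj (v := v)
  have h' := congrArg (· ▷ A) h
  simpa only [whiskerRight_comp_tensorProj, cancel_mono] using h'

lemma comp_tensorProj_surjective {M N : C} [IsIso (tensorProj v M)] :
    Function.Surjective (fun f : M ⟶ N ⊗ A => f ≫ tensorProj v N) :=
  fun g => ⟨inv (tensorProj v M) ≫ g ▷ A, by simp [tensorProj_naturality]⟩

end CategoryTheory.MonoidalCategory

theorem stmt6_general {C : Type*} [Category C] [MonoidalCategory C]
    {A : C} (v : A ⟶ 𝟙_ C)
    (h₂ : IsIso ((v ▷ A) ≫ (λ_ A).hom))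
    {M : C} (hM : IsIso ((M ◁ v) ≫ (ρ_ M).hom)) :
    ∀ N : C, Function.Bijective
      (fun f : M ⟶ N ⊗ A => f ≫ (N ◁ v) ≫ (ρ_ N).hom) := by
  intro N
  have : IsIso (tensorProj v M) := hM
  exact ⟨comp_tensorProj_injective, comp_tensorProj_surjective⟩

/-- (rl3 abstracted) Let `A` be an idempotent object (`v : A ⟶ 𝟙`, both projections
`A ⊗ A ⟶ A` isomorphisms) and `M` a module over `A` (the projection `M ⊗ A ⟶ M` is an
isomorphism). Then for every `N`, postcomposition with the projection `N ⊗ A ⟶ N`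
induces a bijection `Hom(M, N ⊗ A) ≃ Hom(M, N)`. -/
theorem stmt6 {C : Type*} [Category C] [MonoidalCategory C] [SymmetricCategory C]
    {A : C} (v : A ⟶ 𝟙_ C)
    (h₁ : IsIso ((A ◁ v) ≫ (ρ_ A).hom)) (h₂ : IsIso ((v ▷ A) ≫ (λ_ A).hom))
    {M : C} (hM : IsIso ((M ◁ v) ≫ (ρ_ M).hom)) :
    ∀ N : C, Function.Bijective
      (fun f : M ⟶ N ⊗ A => f ≫ (N ◁ v) ≫ (ρ_ N).hom) :=
  stmt6_general v h₂ hM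
end

section
/- Let D be a triangulated category, S a family of triangulated functors s_n : D → D_n indexed by integers n ≥ 0, obtained as s_n = Π_{<n+1} ∘ Π_{≥n} from a filtration by orthogonal thick subcategories as in the slice filtration. If M ∈ D satisfies s_n(M) = 0 for all n, and M lies in DT_{<N} for some N while also Π_{≥n}-truncations exist for all n, then M = 0. -/
open CategoryTheory CategoryTheory.Limits CategoryTheory.Pretriangulated

/-! Vanishing slices make every transition map `A (n + 1) ⟶ A n` an isomorphism, so
`M ≅ A 0 ≅ A N` lies in `DT_{≥N}`; since `M` also lies in `DT_{<N}`, orthogonality forces the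
isomorphism `A N ⟶ M` to vanish, hence `M ≅ 0`. -/

namespace CategoryTheory

lemma isIso_of_isIso_zero_of_transitions {C : Type*} [Category C] {X : ℕ → C} {M : C}
    (a : ∀ n, X n ⟶ M) (t : ∀ n, X (n + 1) ⟶ X n) (ht : ∀ n, t n ≫ a n = a (n + 1))
    (htiso : ∀ n, IsIso (t n)) (ha0 : IsIso (a 0)) (n : ℕ) : IsIso (a n) := by
  induction n with
  | zero => exact ha0
  | succ k ih =>
    rw [← ht k]
    exact IsIso.comp_isIso

lemma eq_zero_of_shift_zero_eq_zero {C : Type*} [Category C] [HasZeroMorphisms C]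
    [HasShift C ℤ] {P Q : C} (h : ∀ f : P⟦(0 : ℤ)⟧ ⟶ Q, f = 0) (f : P ⟶ Q) : f = 0 := by
  simpa using (shiftFunctorZero C ℤ).inv.app P ≫= h ((shiftFunctorZero C ℤ).hom.app P ≫ f)

end CategoryTheory

/-- (slconserv) The total slice functor is conservative: if all slices `s_n(M)` of `M`
vanish, and `M` lies in `DT_{<N}` while `Π_{≥0}M ≅ M`, then `M ≅ 0`. The slice filtration
is encoded by truncation triangles `A n → M → B n → A n [1]` with `A n ∈ DT_{≥n}`,
`B n ∈ DT_{<n}`, transition maps `t n : A (n+1) → A n` over `M`, and slice triangles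
`A (n+1) → A n → s n → A (n+1)[1]`. -/
theorem stmt9 {C : Type*} [Category C] [Preadditive C] [HasZeroObject C] [HasShift C ℤ]
    [∀ n : ℤ, (shiftFunctor C n).Additive] [Pretriangulated C]
    (Pge Plt : ℕ → C → Prop)
    (horth : ∀ (n : ℕ) (P Q : C) (k : ℤ), Pge n P → Plt n Q → ∀ f : (P⟦k⟧) ⟶ Q, f = 0)
    (M : C) (N : ℕ)
    (A : ℕ → C) (a : ∀ n, A n ⟶ M)
    (B : ℕ → C) (b : ∀ n, M ⟶ B n) (c : ∀ n, B n ⟶ (A n)⟦(1 : ℤ)⟧)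
    (hA : ∀ n, Pge n (A n)) (hB : ∀ n, Plt n (B n))
    (htri : ∀ n, Triangle.mk (a n) (b n) (c n) ∈ distTriang C)
    (t : ∀ n, A (n + 1) ⟶ A n) (ht : ∀ n, t n ≫ a n = a (n + 1))
    (s : ℕ → C) (σ : ∀ n, A n ⟶ s n) (δ : ∀ n, s n ⟶ (A (n + 1))⟦(1 : ℤ)⟧)
    (hstri : ∀ n, Triangle.mk (t n) (σ n) (δ n) ∈ distTriang C)
    (ha0 : IsIso (a 0))
    (hM : Plt N M)
    (hs : ∀ n, IsZero (s n)) :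
    IsZero M := by
  have htiso : ∀ n, IsIso (t n) := fun n => (Triangle.isZero₃_iff_isIso₁ _ (hstri n)).1 (hs n)
  have haN : IsIso (a N) := isIso_of_isIso_zero_of_transitions a t ht htiso ha0 N
  have haN_zero : a N = 0 := eq_zero_of_shift_zero_eq_zero (horth N (A N) M 0 (hA N) hM) (a N)
  rw [haN_zero, isIsoZero_iff_source_target_isZero] at haN
  exact haN.2
end

section
/- Let D be a triangulated category with slice truncations as in the slice filtration, n ≥ 0 an integer, and M₀ →a M₁ →b M₂ a sequence of morphisms such that: (1) M₀ ∈ DT_{≥n} and s_i(a) is an isomorphism for all i ≥ n; (2) M₂ ∈ DT_{<n} and s_i(b) is an isomorphism for all i < n. Then there exists a unique morphism M₂ → M₀[1] making M₀ → M₁ → M₂ → M₀[1] a distinguished triangle, and this triangle is isomorphic to the truncation triangle Π_{≥n}(M₁) → M₁ → Π_{<n}(M₁) → Π_{≥n}(M₁)[1]. -/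
/-!
Everything is checked slice by slice, which suffices because the slice functors are jointly
conservative. In degrees `i < n` the slices of objects of `DT_{≥n}` vanish and in degrees
`i ≥ n` those of objects of `DT_{<n}` vanish, so in each degree one end of every triangle
involved is zero and the remaining comparison maps are isomorphisms by the five lemma.
Orthogonality gives `a ≫ b = 0`, so `b` factors through the cone of `a`, by a map that is an
isomorphism on all slices; it also kills `Hom(M₀[1], M₂)`, which forces the connecting map to
be unique, and `Hom(M₀, Π_{<n}M₁)`, which lets `a` lift along `Π_{≥n}M₁ → M₁`.
-/

open CategoryTheory CategoryTheory.Limits CategoryTheory.Pretriangulated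

lemma CategoryTheory.eq_zero_of_forall_shiftZero_eq_zero {C A : Type*} [Category C]
    [HasZeroMorphisms C] [AddMonoid A] [HasShift C A] {P Q : C}
    (h : ∀ f : P⟦(0 : A)⟧ ⟶ Q, f = 0) (f : P ⟶ Q) : f = 0 := by
  simpa using congrArg ((shiftFunctorZero C A).inv.app P ≫ ·)
    (h ((shiftFunctorZero C A).hom.app P ≫ f))

namespace CategoryTheory.Pretriangulated

variable {C : Type*} [Category C] [Preadditive C] [HasZeroObject C] [HasShift C ℤ]
  [∀ n : ℤ, (shiftFunctor C n).Additive] [Pretriangulated C]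
  {D : Type*} [Category D] [Preadditive D] [HasZeroObject D] [HasShift D ℤ]
  [∀ n : ℤ, (shiftFunctor D n).Additive] [Pretriangulated D]
  {ι : Type*}

lemma mor₃_eq_of_forall_eq_zero {X Y Z : C} {a : X ⟶ Y} {b : Y ⟶ Z} {h₁ h₂ : Z ⟶ X⟦(1 : ℤ)⟧}
    (hd₁ : Triangle.mk a b h₁ ∈ distTriang C) (hd₂ : Triangle.mk a b h₂ ∈ distTriang C)
    (hZ : ∀ e : X⟦(1 : ℤ)⟧ ⟶ Z, e = 0) : h₁ = h₂ := by
  obtain ⟨c, hbc, hc⟩ : ∃ c : Z ⟶ Z, b ≫ c = 𝟙 Y ≫ b ∧ h₁ ≫ (𝟙 X)⟦(1 : ℤ)⟧' = c ≫ h₂ :=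
    complete_distinguished_triangle_morphism _ _ hd₁ hd₂ (𝟙 X) (𝟙 Y)
      (by show a ≫ 𝟙 Y = 𝟙 X ≫ a; simp)
  obtain ⟨e, he⟩ : ∃ e : X⟦(1 : ℤ)⟧ ⟶ Z, c - 𝟙 Z = h₂ ≫ e :=
    Triangle.yoneda_exact₃ _ hd₂ (c - 𝟙 Z) (show b ≫ (c - 𝟙 Z) = 0 by simp [hbc])
  have hc_id : c = 𝟙 Z := by
    rwa [hZ e, comp_zero, sub_eq_zero] at he
  simpa [hc_id] using hc

section Conservative

variable (F : ι → C ⥤ D) [∀ i, (F i).CommShift ℤ] [∀ i, (F i).IsTriangulated]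

lemma isIso_of_forall_isIso_map (hF : ∀ X : C, (∀ i, IsZero ((F i).obj X)) → IsZero X)
    {X Y : C} (f : X ⟶ Y) (hf : ∀ i, IsIso ((F i).map f)) : IsIso f := by
  obtain ⟨Z, g, h, hT⟩ := distinguished_cocone_triangle f
  refine (Triangle.isZero₃_iff_isIso₁ _ hT).1 (hF Z fun i => ?_)
  exact Triangle.isZero₃_of_isIso₁ _ ((F i).map_distinguished _ hT) (hf i)

lemma exists_distinguished_mk_of_forall_isIso_map
    (hF : ∀ X : C, (∀ i, IsZero ((F i).obj X)) → IsZero X)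
    {X Y Z : C} (a : X ⟶ Y) (b : Y ⟶ Z) (hab : a ≫ b = 0)
    (hslice : ∀ i, (IsZero ((F i).obj X) ∧ IsIso ((F i).map b)) ∨
      (IsIso ((F i).map a) ∧ IsZero ((F i).obj Z))) :
    ∃ h : Z ⟶ X⟦(1 : ℤ)⟧, Triangle.mk a b h ∈ distTriang C := by
  obtain ⟨W, b', h', hT⟩ := distinguished_cocone_triangle a
  obtain ⟨φ, hφ⟩ : ∃ φ : W ⟶ Z, b = b' ≫ φ := Triangle.yoneda_exact₂ _ hT b hab
  have : IsIso φ := isIso_of_forall_isIso_map F hF φ fun i => by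
    have hFT := (F i).map_distinguished _ hT
    rcases hslice i with ⟨hX, hb⟩ | ⟨ha, hZ⟩
    · have : IsIso ((F i).map b') := (Triangle.isZero₁_iff_isIso₂ _ hFT).1 hX
      rw [hφ, Functor.map_comp] at hb
      exact IsIso.of_isIso_comp_left ((F i).map b') _
    · exact (Triangle.isZero₃_of_isIso₁ _ hFT ha).isIso hZ _
  refine ⟨inv φ ≫ h', isomorphic_distinguished _ hT _ ?_⟩
  exact Triangle.isoMk _ _ (Iso.refl _) (Iso.refl _) (asIso φ).symm
    (by show a ≫ 𝟙 Y = 𝟙 X ≫ a; simp) (by show b ≫ inv φ = 𝟙 Y ≫ b'; simp [hφ])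
    (by show (inv φ ≫ h') ≫ (𝟙 X)⟦(1 : ℤ)⟧' = inv φ ≫ h'; simp)

lemma isIso_of_isIso_hom₂_of_forall_isZero
    (hF : ∀ X : C, (∀ i, IsZero ((F i).obj X)) → IsZero X)
    {T T' : Triangle C} (hT : T ∈ distTriang C) (hT' : T' ∈ distTriang C)
    (ψ : T ⟶ T') [IsIso ψ.hom₂]
    (hzero : ∀ i, (IsZero ((F i).obj T.obj₁) ∧ IsZero ((F i).obj T'.obj₁)) ∨
      (IsZero ((F i).obj T.obj₃) ∧ IsZero ((F i).obj T'.obj₃))) : IsIso ψ := by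
  have hslice : ∀ i, IsIso ((F i).map ψ.hom₁) ∧ IsIso ((F i).map ψ.hom₃) := by
    intro i
    let Fψ := (F i).mapTriangle.map ψ
    have hFT := (F i).map_distinguished _ hT
    have hFT' := (F i).map_distinguished _ hT'
    have : IsIso Fψ.hom₂ := inferInstanceAs (IsIso ((F i).map ψ.hom₂))
    rcases hzero i with ⟨h₁, h₁'⟩ | ⟨h₃, h₃'⟩
    · have : IsIso Fψ.hom₁ := h₁.isIso h₁' _
      exact ⟨this, isIso₃_of_isIso₁₂ Fψ hFT hFT' this inferInstance⟩
    · have : IsIso Fψ.hom₃ := h₃.isIso h₃' _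
      exact ⟨isIso₁_of_isIso₂₃ Fψ hFT hFT' inferInstance this, this⟩
  exact Triangle.isIso_of_isIsos ψ
    (isIso_of_forall_isIso_map F hF _ fun i => (hslice i).1) inferInstance
    (isIso_of_forall_isIso_map F hF _ fun i => (hslice i).2)

lemma nonempty_iso_mk_of_forall_isZero
    (hF : ∀ X : C, (∀ i, IsZero ((F i).obj X)) → IsZero X)
    {X Y Z X' Z' : C} {a : X ⟶ Y} {b : Y ⟶ Z} {h : Z ⟶ X⟦(1 : ℤ)⟧}
    {g : X' ⟶ Y} {l : Y ⟶ Z'} {d : Z' ⟶ X'⟦(1 : ℤ)⟧}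
    (hd : Triangle.mk a b h ∈ distTriang C) (hd' : Triangle.mk g l d ∈ distTriang C)
    (hal : a ≫ l = 0)
    (hzero : ∀ i, (IsZero ((F i).obj X) ∧ IsZero ((F i).obj X')) ∨
      (IsZero ((F i).obj Z) ∧ IsZero ((F i).obj Z'))) :
    Nonempty (Triangle.mk a b h ≅ Triangle.mk g l d) := by
  obtain ⟨α, hα⟩ : ∃ α : X ⟶ X', a = α ≫ g := Triangle.coyoneda_exact₂ _ hd' a hal
  obtain ⟨γ, hγ₁, hγ₂⟩ : ∃ γ : Z ⟶ Z', b ≫ γ = 𝟙 Y ≫ l ∧ h ≫ α⟦(1 : ℤ)⟧' = γ ≫ d :=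
    complete_distinguished_triangle_morphism _ _ hd hd' α (𝟙 Y) ((Category.comp_id a).trans hα)
  let ψ : Triangle.mk a b h ⟶ Triangle.mk g l d :=
    Triangle.homMk _ _ α (𝟙 Y) γ ((Category.comp_id a).trans hα) hγ₁ hγ₂
  have : IsIso ψ.hom₂ := inferInstanceAs (IsIso (𝟙 Y))
  have := isIso_of_isIso_hom₂_of_forall_isZero F hF hd hd' ψ hzero
  exact ⟨asIso ψ⟩

end Conservative

end CategoryTheory.Pretriangulated

/-- (unext) Let `M₀ →a M₁ →b M₂` with `M₀ ∈ DT_{≥n}`, `M₂ ∈ DT_{<n}`, the slices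
`s_i(a)` isomorphisms for `i ≥ n` and `s_i(b)` isomorphisms for `i < n`. Then there is a
unique `h : M₂ ⟶ M₀[1]` making `M₀ → M₁ → M₂ → M₀[1]` distinguished, and any such
triangle is isomorphic to the truncation triangle `Π_{≥n}M₁ → M₁ → Π_{<n}M₁`. -/
theorem stmt10 {C : Type*} [Category C] [Preadditive C] [HasZeroObject C] [HasShift C ℤ]
    [∀ n : ℤ, (shiftFunctor C n).Additive] [Pretriangulated C]
    (Pge Plt : ℕ → C → Prop)
    (horth : ∀ (n : ℕ) (P Q : C) (k : ℤ), Pge n P → Plt n Q → ∀ f : (P⟦k⟧) ⟶ Q, f = 0)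
    (s : ℕ → C ⥤ C) [∀ i, (s i).CommShift ℤ] [∀ i, (s i).IsTriangulated]
    (hconserv : ∀ X : C, (∀ i, IsZero ((s i).obj X)) → IsZero X)
    (hgeZero : ∀ (n : ℕ) (P : C), Pge n P → ∀ i, i < n → IsZero ((s i).obj P))
    (hltZero : ∀ (n : ℕ) (Q : C), Plt n Q → ∀ i, n ≤ i → IsZero ((s i).obj Q))
    (n : ℕ) {M₀ M₁ M₂ : C} (a : M₀ ⟶ M₁) (b : M₁ ⟶ M₂)
    (h₀ : Pge n M₀) (h₂ : Plt n M₂)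
    (hsa : ∀ i, n ≤ i → IsIso ((s i).map a))
    (hsb : ∀ i, i < n → IsIso ((s i).map b))
    {G L : C} (g : G ⟶ M₁) (l : M₁ ⟶ L) (d : L ⟶ G⟦(1 : ℤ)⟧)
    (hGL : Triangle.mk g l d ∈ distTriang C) (hG : Pge n G) (hL : Plt n L) :
    (∃! h : M₂ ⟶ M₀⟦(1 : ℤ)⟧, Triangle.mk a b h ∈ distTriang C) ∧
    (∀ h : M₂ ⟶ M₀⟦(1 : ℤ)⟧, (Triangle.mk a b h ∈ distTriang C) →
      Nonempty (Triangle.mk a b h ≅ Triangle.mk g l d)) := by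
  have hom_eq_zero {P Q : C} (hP : Pge n P) (hQ : Plt n Q) (f : P ⟶ Q) : f = 0 :=
    eq_zero_of_forall_shiftZero_eq_zero (horth n P Q 0 hP hQ) f
  obtain ⟨h, hd⟩ := exists_distinguished_mk_of_forall_isIso_map s hconserv a b
    (hom_eq_zero h₀ h₂ _) fun i => (lt_or_ge i n).imp
      (fun hi => ⟨hgeZero n M₀ h₀ i hi, hsb i hi⟩) (fun hi => ⟨hsa i hi, hltZero n M₂ h₂ i hi⟩)
  have h_unique (h' : M₂ ⟶ M₀⟦(1 : ℤ)⟧) (hd' : Triangle.mk a b h' ∈ distTriang C) : h' = h :=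
    mor₃_eq_of_forall_eq_zero hd' hd (horth n M₀ M₂ 1 h₀ h₂)
  refine ⟨⟨h, hd, h_unique⟩, fun h' hd' => ?_⟩
  exact nonempty_iso_mk_of_forall_isZero s hconserv hd' hGL (hom_eq_zero h₀ hL _) fun i =>
    (lt_or_ge i n).imp (fun hi => ⟨hgeZero n M₀ h₀ i hi, hgeZero n G hG i hi⟩)
      (fun hi => ⟨hltZero n M₂ h₂ i hi, hltZero n L hL i hi⟩)
end

section
/- Let C be a symmetric monoidal category, v : A → 1 a morphism such that both projections A ⊗ A → A are isomorphisms, and let X be an object together with a morphism u : X → 1 and a comultiplication-type morphism Δ : X → X ⊗ X with (u ⊗ id) ∘ Δ = λ⁻¹ and (id ⊗ u) ∘ Δ = ρ⁻¹ (up to unitors). If u factors as u = v ∘ w for some w : X → A, then the morphism X ⊗ A → X (induced by v) is a split epimorphism with section (id_X ⊗ w) ∘ Δ; if additionally the category is Karoubian and the full subcategory of objects M with M ⊗ A → M an isomorphism is closed under retracts, then X lies in that subcategory. -/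
open CategoryTheory CategoryTheory.MonoidalCategory

namespace CategoryTheory.MonoidalCategory

variable {C : Type*} [Category C] [MonoidalCategory C]

def retractTensorOfCounitEq {A X : C} {v : A ⟶ 𝟙_ C} {u : X ⟶ 𝟙_ C} {Δ : X ⟶ X ⊗ X}
    (hΔ : Δ ≫ (X ◁ u) ≫ (ρ_ X).hom = 𝟙 X) {w : X ⟶ A} (hw : u = w ≫ v) :
    Retract X (X ⊗ A) where
  i := Δ ≫ (X ◁ w)
  r := (X ◁ v) ≫ (ρ_ X).hom
  retract := by
    rw [← hΔ, hw]
    simp [whiskerLeft_comp]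

lemma tensor_whiskerLeft_comp_rightUnitor_hom {A N : C} (v : A ⟶ 𝟙_ C) (Y : C) :
    ((Y ⊗ N) ◁ v) ≫ (ρ_ (Y ⊗ N)).hom = (α_ Y N A).hom ≫ (Y ◁ ((N ◁ v) ≫ (ρ_ N).hom)) := by
  simp [whiskerLeft_comp]

lemma isIso_tensor_whiskerLeft_comp_rightUnitor_hom {A N : C} {v : A ⟶ 𝟙_ C}
    (h : IsIso ((N ◁ v) ≫ (ρ_ N).hom)) (Y : C) :
    IsIso (((Y ⊗ N) ◁ v) ≫ (ρ_ (Y ⊗ N)).hom) := by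
  rw [tensor_whiskerLeft_comp_rightUnitor_hom]
  infer_instance

end CategoryTheory.MonoidalCategory

theorem stmt15_general {C : Type*} [Category C] [MonoidalCategory C]
    {A : C} (v : A ⟶ 𝟙_ C)
    (h₁ : IsIso ((A ◁ v) ≫ (ρ_ A).hom))
    {X : C} (u : X ⟶ 𝟙_ C) (Δ : X ⟶ X ⊗ X)
    (hΔ₁ : Δ ≫ (X ◁ u) ≫ (ρ_ X).hom = 𝟙 X)
    (w : X ⟶ A) (hw : u = w ≫ v) :
    ((Δ ≫ (X ◁ w)) ≫ ((X ◁ v) ≫ (ρ_ X).hom) = 𝟙 X) ∧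
    ((∀ (M M' : C) (i : M ⟶ M') (r : M' ⟶ M), i ≫ r = 𝟙 M →
        IsIso ((M' ◁ v) ≫ (ρ_ M').hom) → IsIso ((M ◁ v) ≫ (ρ_ M).hom)) →
      IsIso ((X ◁ v) ≫ (ρ_ X).hom)) := by
  let R := retractTensorOfCounitEq (A := A) hΔ₁ hw
  refine ⟨R.retract, fun closed_under_retracts => ?_⟩
  exact closed_under_retracts X (X ⊗ A) R.i R.r R.retract
    (isIso_tensor_whiskerLeft_comp_rightUnitor_hom h₁ X)

/-- (donotneed2 abstracted) Let `A` be an idempotent object (`v : A ⟶ 𝟙`, both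
projections `A ⊗ A ⟶ A` isomorphisms) in a Karoubian symmetric monoidal category, and
`X` an object with counit `u : X ⟶ 𝟙` and diagonal `Δ : X ⟶ X ⊗ X` compatible with `u`.
If `u` factors as `u = w ≫ v`, then the projection `X ⊗ A ⟶ X` is a split epimorphism
with section `(id_X ⊗ w) ∘ Δ`; and if the subcategory of `M` with `M ⊗ A ⟶ M` an
isomorphism is closed under retracts, then `X` lies in it. -/
theorem stmt15 {C : Type*} [Category C] [MonoidalCategory C] [SymmetricCategory C]
    [IsIdempotentComplete C]
    {A : C} (v : A ⟶ 𝟙_ C)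
    (h₁ : IsIso ((A ◁ v) ≫ (ρ_ A).hom)) (h₂ : IsIso ((v ▷ A) ≫ (λ_ A).hom))
    {X : C} (u : X ⟶ 𝟙_ C) (Δ : X ⟶ X ⊗ X)
    (hΔ₁ : Δ ≫ (X ◁ u) ≫ (ρ_ X).hom = 𝟙 X)
    (hΔ₂ : Δ ≫ (u ▷ X) ≫ (λ_ X).hom = 𝟙 X)
    (w : X ⟶ A) (hw : u = w ≫ v) :
    ((Δ ≫ (X ◁ w)) ≫ ((X ◁ v) ≫ (ρ_ X).hom) = 𝟙 X) ∧
    ((∀ (M M' : C) (i : M ⟶ M') (r : M' ⟶ M), i ≫ r = 𝟙 M →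
        IsIso ((M' ◁ v) ≫ (ρ_ M').hom) → IsIso ((M ◁ v) ≫ (ρ_ M).hom)) →
      IsIso ((X ◁ v) ≫ (ρ_ X).hom)) :=
  stmt15_general v h₁ u Δ hΔ₁ w hw
end

section
/- Let C be a symmetric monoidal category, A an idempotent object as above (v : A → 1 with both projections A ⊗ A → A isomorphisms), M an object with M ⊗ A → M an isomorphism, (N, e : M ⊗ N → P) a pair such that for every Q with Q ⊗ A → Q an isomorphism, the map Hom(Q, N) → Hom(Q ⊗ M, P) is a bijection. Suppose N is 'restricted': for every object K of C, the map Hom(K, N) → Hom(K ⊗ A, N) induced by K ⊗ A → K is a bijection. Then (N, e) is an internal Hom-object from M to P in all of C: for every object K, Hom(K, N) → Hom(K ⊗ M, P) is a bijection. -/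
/-!
Write `r_K : K ⊗ A ⟶ K` for the action `(K ◁ v) ≫ ρ_K`. Precomposition with `r_K ▷ M` turns the
evaluation map `Hom(K, N) → Hom(K ⊗ M, P)` into the composite of `Hom(K, N) ≅ Hom(K ⊗ A, N)`
(restrictedness of `N`) with the evaluation map of `K ⊗ A`, which is bijective because `K ⊗ A`
is an `A`-module. And `r_K ▷ M` is invertible since, up to associator and braiding, it is
`K ◁ r_M`.
-/

open CategoryTheory CategoryTheory.MonoidalCategory

namespace CategoryTheory.MonoidalCategory

variable {C : Type*} [Category C] [MonoidalCategory C]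

section Action

variable {A : C} (v : A ⟶ 𝟙_ C)

theorem whiskerLeft_comp_rightUnitor_tensor (K X : C) :
    ((K ⊗ X) ◁ v) ≫ (ρ_ (K ⊗ X)).hom = (α_ K X A).hom ≫ K ◁ ((X ◁ v) ≫ (ρ_ X).hom) := by
  simp

theorem isIso_whiskerLeft_comp_rightUnitor_tensor {X : C} (hX : IsIso ((X ◁ v) ≫ (ρ_ X).hom))
    (K : C) : IsIso (((K ⊗ X) ◁ v) ≫ (ρ_ (K ⊗ X)).hom) := by
  rw [whiskerLeft_comp_rightUnitor_tensor]
  infer_instance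

theorem whiskerLeft_comp_rightUnitor_whiskerRight (K M : C) :
    ((K ◁ v) ≫ (ρ_ K).hom) ▷ M = (α_ K A M).hom ≫ K ◁ ((v ▷ M) ≫ (λ_ M).hom) := by
  simp

theorem whiskerRight_comp_leftUnitor_eq_braiding_comp [BraidedCategory C] (M : C) :
    (v ▷ M) ≫ (λ_ M).hom = (β_ A M).hom ≫ (M ◁ v) ≫ (ρ_ M).hom := by
  rw [← Category.assoc, ← BraidedCategory.braiding_naturality_left v M]
  simp

theorem isIso_whiskerLeft_comp_rightUnitor_whiskerRight [BraidedCategory C] {M : C}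
    (hM : IsIso ((M ◁ v) ≫ (ρ_ M).hom)) (K : C) : IsIso (((K ◁ v) ≫ (ρ_ K).hom) ▷ M) := by
  rw [whiskerLeft_comp_rightUnitor_whiskerRight, whiskerRight_comp_leftUnitor_eq_braiding_comp]
  infer_instance

end Action

section Evaluation

variable [BraidedCategory C] {M N P : C} (e : M ⊗ N ⟶ P)

def homEval (K : C) (f : K ⟶ N) : K ⊗ M ⟶ P :=
  (f ▷ M) ≫ (β_ N M).hom ≫ e

theorem homEval_comp {K L : C} (g : L ⟶ K) (f : K ⟶ N) :
    homEval e L (g ≫ f) = (g ▷ M) ≫ homEval e K f := by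
  simp [homEval]

theorem bijective_homEval_of_bijective_precomp {K L : C} (g : L ⟶ K) [IsIso (g ▷ M)]
    (hg : Function.Bijective fun f : K ⟶ N => g ≫ f)
    (hL : Function.Bijective (homEval e L)) : Function.Bijective (homEval e K) := by
  have hcomm : (fun h : K ⊗ M ⟶ P => (g ▷ M) ≫ h) ∘ homEval e K
      = homEval e L ∘ fun f : K ⟶ N => g ≫ f := by
    funext f
    exact (homEval_comp e g f).symm
  have hpre : Function.Bijective fun h : K ⊗ M ⟶ P => (g ▷ M) ≫ h :=
    (asIso (g ▷ M)).symm.homFromEquiv.bijective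
  rw [← hpre.of_comp_iff', hcomm]
  exact hL.comp hg

end Evaluation

end CategoryTheory.MonoidalCategory

theorem stmt17_general {C : Type*} [Category C] [MonoidalCategory C] [SymmetricCategory C]
    {A : C} (v : A ⟶ 𝟙_ C)
    (h₁ : IsIso ((A ◁ v) ≫ (ρ_ A).hom))
    {M : C} (hM : IsIso ((M ◁ v) ≫ (ρ_ M).hom))
    {N P : C} (e : M ⊗ N ⟶ P)
    (hIH : ∀ Q : C, IsIso ((Q ◁ v) ≫ (ρ_ Q).hom) →
      Function.Bijective (fun f : Q ⟶ N => (f ▷ M) ≫ (β_ N M).hom ≫ e))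
    (hres : ∀ K : C, Function.Bijective
      (fun φ : K ⟶ N => ((K ◁ v) ≫ (ρ_ K).hom) ≫ φ)) :
    ∀ K : C, Function.Bijective (fun f : K ⟶ N => (f ▷ M) ≫ (β_ N M).hom ≫ e) := by
  intro K
  have := isIso_whiskerLeft_comp_rightUnitor_whiskerRight v hM K
  exact bijective_homEval_of_bijective_precomp e _ (hres K)
    (hIH (K ⊗ A) (isIso_whiskerLeft_comp_rightUnitor_tensor v h₁ K))

/-- (intres, part 1) Let `A` be an idempotent object, `M` an `A`-module
(`M ⊗ A ⟶ M` an isomorphism), and `(N, e : M ⊗ N ⟶ P)` an internal Hom-object from `M`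
to `P` relative to the subcategory `D_A` of `A`-modules. If `N` is restricted (for every
`K`, precomposition with `K ⊗ A ⟶ K` gives a bijection `Hom(K,N) ≅ Hom(K ⊗ A, N)`),
then `(N, e)` is an internal Hom-object from `M` to `P` in the whole category. -/
theorem stmt17 {C : Type*} [Category C] [MonoidalCategory C] [SymmetricCategory C]
    {A : C} (v : A ⟶ 𝟙_ C)
    (h₁ : IsIso ((A ◁ v) ≫ (ρ_ A).hom)) (h₂ : IsIso ((v ▷ A) ≫ (λ_ A).hom))
    {M : C} (hM : IsIso ((M ◁ v) ≫ (ρ_ M).hom))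
    {N P : C} (e : M ⊗ N ⟶ P)
    (hIH : ∀ Q : C, IsIso ((Q ◁ v) ≫ (ρ_ Q).hom) →
      Function.Bijective (fun f : Q ⟶ N => (f ▷ M) ≫ (β_ N M).hom ≫ e))
    (hres : ∀ K : C, Function.Bijective
      (fun φ : K ⟶ N => ((K ◁ v) ≫ (ρ_ K).hom) ≫ φ)) :
    ∀ K : C, Function.Bijective (fun f : K ⟶ N => (f ▷ M) ≫ (β_ N M).hom ≫ e) :=
  stmt17_general v h₁ hM e hIH hres
end

section
/- Let C be a symmetric monoidal category, v : A → 1 with both projections A ⊗ A → A isomorphisms, M, N objects with M ⊗ A → M and N ⊗ A → N isomorphisms, P any object, and e : M ⊗ N → P a morphism making (N, e) an internal Hom-object from M to P in C. Let e_A : M ⊗ N → P ⊗ A be the unique morphism corresponding to e under the bijection Hom(M ⊗ N, P ⊗ A) ≅ Hom(M ⊗ N, P) (which holds since M ⊗ N ∈ D_A). Then (N, e_A) is an internal Hom-object from M to P ⊗ A in the full subcategory D_A: for all Q with Q ⊗ A → Q an isomorphism, the map Hom(Q, N) → Hom(Q ⊗ M, P ⊗ A) induced by e_A is a bijection. -/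
/-!
Write `ε_X : X ⊗ A ⟶ X` for the map induced by `v`. For `X` with `ε_X` invertible,
post-composition with `ε_P` is a bijection `Hom(X, P ⊗ A) ≃ Hom(X, P)`: naturality of `ε`
gives `g ▷ A ≫ ε_{P ⊗ A} = ε_X ≫ g`, so `ε_X⁻¹ ≫ f ▷ A` is a preimage of `f`, and
`g ↦ g ≫ ε_P` is injective because `ε_P ▷ A` is, up to associator, `P ◁ (v ▷ A ≫ λ_A)`,
an isomorphism. Since `M ∈ D_A` and `D_A` is a ⊗-ideal, this applies to `X = Q ⊗ M`, and the
map induced by `e_A` composed with this bijection is the bijection induced by `e`.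
-/

open CategoryTheory CategoryTheory.MonoidalCategory

namespace CategoryTheory.MonoidalCategory

variable {C : Type*} [Category C] [MonoidalCategory C] {A : C} (v : A ⟶ 𝟙_ C)

def counitRight (X : C) : X ⊗ A ⟶ X := X ◁ v ≫ (ρ_ X).hom

lemma counitRight_naturality {X Y : C} (f : X ⟶ Y) :
    f ▷ A ≫ counitRight v Y = counitRight v X ≫ f := by
  simp [counitRight, ← whisker_exchange_assoc]

lemma counitRight_tensor (X Y : C) :
    counitRight v (X ⊗ Y) = (α_ X Y A).hom ≫ X ◁ counitRight v Y := by
  simp [counitRight]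

lemma counitRight_whiskerRight (X : C) :
    counitRight v X ▷ A = (α_ X A A).hom ≫ X ◁ (v ▷ A ≫ (λ_ A).hom) := by
  simp [counitRight]

lemma isIso_counitRight_tensor (X : C) {Y : C} (hY : IsIso (counitRight v Y)) :
    IsIso (counitRight v (X ⊗ Y)) := by
  rw [counitRight_tensor]
  infer_instance

lemma bijective_comp_counitRight (hA : IsIso (v ▷ A ≫ (λ_ A).hom)) {X : C}
    (hX : IsIso (counitRight v X)) (P : C) :
    Function.Bijective fun g : X ⟶ P ⊗ A => g ≫ counitRight v P := by
  constructor
  · intro g₁ g₂ h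
    have hA' : IsIso (counitRight v P ▷ A) := by
      rw [counitRight_whiskerRight]
      infer_instance
    have hwhisker : g₁ ▷ A = g₂ ▷ A := by
      rw [← cancel_mono (counitRight v P ▷ A), ← comp_whiskerRight, ← comp_whiskerRight]
      exact congrArg (· ▷ A) h
    rw [← cancel_epi (counitRight v X), ← counitRight_naturality, ← counitRight_naturality,
      hwhisker]
  · intro f
    exact ⟨inv (counitRight v X) ≫ f ▷ A, by simp [counitRight_naturality]⟩

end CategoryTheory.MonoidalCategory

theorem stmt19_general {C : Type*} [Category C] [MonoidalCategory C] [SymmetricCategory C]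
    {A : C} (v : A ⟶ 𝟙_ C)
    (h₂ : IsIso ((v ▷ A) ≫ (λ_ A).hom))
    {M N : C} (hM : IsIso ((M ◁ v) ≫ (ρ_ M).hom))
    {P : C} (e : M ⊗ N ⟶ P)
    (hIH : ∀ Q : C, Function.Bijective (fun f : Q ⟶ N => (f ▷ M) ≫ (β_ N M).hom ≫ e))
    (eA : M ⊗ N ⟶ P ⊗ A) (heA : eA ≫ (P ◁ v) ≫ (ρ_ P).hom = e) :
    ∀ Q : C, IsIso ((Q ◁ v) ≫ (ρ_ Q).hom) →
      Function.Bijective (fun f : Q ⟶ N => (f ▷ M) ≫ (β_ N M).hom ≫ eA) := by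
  intro Q _
  have hpost := bijective_comp_counitRight v h₂ (isIso_counitRight_tensor v Q hM) P
  refine (Function.Bijective.of_comp_iff' hpost _).1 ?_
  convert hIH Q using 1
  funext f
  simp [counitRight, ← heA]

/-- (intres0) Let `A` be an idempotent object, `M, N` objects of the subcategory `D_A` of
`A`-modules, and `(N, e : M ⊗ N ⟶ P)` an internal Hom-object from `M` to `P` in the
whole category. Let `e_A : M ⊗ N ⟶ P ⊗ A` correspond to `e` under the bijection
`Hom(M ⊗ N, P ⊗ A) ≅ Hom(M ⊗ N, P)` (i.e. `e_A ≫ (P ⊗ A ⟶ P) = e`). Then `(N, e_A)`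
is an internal Hom-object from `M` to `P ⊗ A` in `D_A`. -/
theorem stmt19 {C : Type*} [Category C] [MonoidalCategory C] [SymmetricCategory C]
    {A : C} (v : A ⟶ 𝟙_ C)
    (h₁ : IsIso ((A ◁ v) ≫ (ρ_ A).hom)) (h₂ : IsIso ((v ▷ A) ≫ (λ_ A).hom))
    {M N : C} (hM : IsIso ((M ◁ v) ≫ (ρ_ M).hom)) (hN : IsIso ((N ◁ v) ≫ (ρ_ N).hom))
    {P : C} (e : M ⊗ N ⟶ P)
    (hIH : ∀ Q : C, Function.Bijective (fun f : Q ⟶ N => (f ▷ M) ≫ (β_ N M).hom ≫ e))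
    (eA : M ⊗ N ⟶ P ⊗ A) (heA : eA ≫ (P ◁ v) ≫ (ρ_ P).hom = e) :
    ∀ Q : C, IsIso ((Q ◁ v) ≫ (ρ_ Q).hom) →
      Function.Bijective (fun f : Q ⟶ N => (f ▷ M) ≫ (β_ N M).hom ≫ eA) :=
  stmt19_general v h₂ hM e hIH eA heA
end
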